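/- Let P : E → B be a split discrete 2-fibration with splitting φ. For every 2-cell α : f ⟹ g between morphisms f, g : B → C of B, the assignment sending X ∈ E_C to the unique vertical morphism α*_X : f*X → g*X satisfying φ(g,X) ∘ α*_X = α_!(φ(f,X)) defines a natural transformation α* : f* ⟹ g* between the transition functors f*, g* : E_C → E_B. -/

import Mathlib

open CategoryTheory Bicategory

universe w₁ v₁ u₁ w₂ v₂ u₂

namespace Paper

/-- A strict 2-functor between strict 2-categories. -/
structure TwoFunctor (K : Type u₁) (L : Type u₂) [Bicategory.{w₁, v₁} K]
    [Bicategory.{w₂, v₂} L] where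
  obj : K → L
  map : ∀ {a b : K}, (a ⟶ b) → (obj a ⟶ obj b)
  map₂ : ∀ {a b : K} {f g : a ⟶ b}, (f ⟶ g) → (map f ⟶ map g)
  map_id : ∀ a : K, map (𝟙 a) = 𝟙 (obj a)
  map_comp : ∀ {a b c : K} (f : a ⟶ b) (g : b ⟶ c), map (f ≫ g) = map f ≫ map g
  map₂_id : ∀ {a b : K} (f : a ⟶ b), map₂ (𝟙 f) = 𝟙 (map f)
  map₂_comp : ∀ {a b : K} {f g h : a ⟶ b} (η : f ⟶ g) (θ : g ⟶ h),
    map₂ (η ≫ θ) = map₂ η ≫ map₂ θ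
  map₂_whiskerLeft : ∀ {a b c : K} (f : a ⟶ b) {g g' : b ⟶ c} (η : g ⟶ g'),
    map₂ (f ◁ η) = eqToHom (map_comp f g) ≫ (map f ◁ map₂ η) ≫ eqToHom (map_comp f g').symm
  map₂_whiskerRight : ∀ {a b c : K} {f f' : a ⟶ b} (η : f ⟶ f') (g : b ⟶ c),
    map₂ (η ▷ g) = eqToHom (map_comp f g) ≫ (map₂ η ▷ map g) ≫ eqToHom (map_comp f' g).symm

variable {E : Type u₁} {B : Type u₂} [Bicategory.{w₁, v₁} E] [Bicategory.{w₂, v₂} B]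
  [Bicategory.Strict E] [Bicategory.Strict B]

/-- A 1-cell is cartesian for the underlying functor of `P` if morphisms into its codomain
factor uniquely through it over a given base factorization. -/
def IsCartesian1 (P : TwoFunctor E B) {a x : E} (g : a ⟶ x) : Prop :=
  ∀ ⦃c : E⦄ (h : c ⟶ x) (u : P.obj c ⟶ P.obj a), P.map h = u ≫ P.map g →
    ∃! w : c ⟶ a, P.map w = u ∧ w ≫ g = h

/-- A splitting of the underlying functor of `P`: chosen cartesian 1-cell lifts, strictly
compatible with identities and composition. -/
structure Cleavage (P : TwoFunctor E B) where
  pullOb : ∀ {x : E} {b : B}, (b ⟶ P.obj x) → E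
  pullHom : ∀ {x : E} {b : B} (f : b ⟶ P.obj x), pullOb f ⟶ x
  pullOb_over : ∀ {x : E} {b : B} (f : b ⟶ P.obj x), P.obj (pullOb f) = b
  pullHom_over : ∀ {x : E} {b : B} (f : b ⟶ P.obj x),
    P.map (pullHom f) = eqToHom (pullOb_over f) ≫ f
  cartesian : ∀ {x : E} {b : B} (f : b ⟶ P.obj x), IsCartesian1 P (pullHom f)
  pullOb_id : ∀ x : E, pullOb (𝟙 (P.obj x)) = x
  pullHom_id : ∀ x : E, HEq (pullHom (𝟙 (P.obj x))) (𝟙 x)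
  pullOb_comp : ∀ {x : E} {b c : B} (g : c ⟶ P.obj x) (f : b ⟶ c),
    pullOb (f ≫ g) = pullOb (f ≫ eqToHom (pullOb_over g).symm : b ⟶ P.obj (pullOb g))
  pullHom_comp : ∀ {x : E} {b c : B} (g : c ⟶ P.obj x) (f : b ⟶ c),
    HEq (pullHom (f ≫ g))
      (pullHom (f ≫ eqToHom (pullOb_over g).symm : b ⟶ P.obj (pullOb g)) ≫ pullHom g)


/-- A 2-cell lift with prescribed source (domain), lying over a 2-cell of the base. -/
structure OpLift2 (P : TwoFunctor E B) {x y : E} (f : x ⟶ y) {ψ : P.obj x ⟶ P.obj y}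
    (β : P.map f ⟶ ψ) where
  g : x ⟶ y
  cell : f ⟶ g
  g_over : P.map g = ψ
  cell_over : P.map₂ cell = β ≫ eqToHom g_over.symm

/-- `P` is locally a discrete opfibration: every 2-cell of the base with source the image of
a 1-cell `f` has a unique lift with source `f`. -/
def IsLocallyDiscreteOpfibration (P : TwoFunctor E B) : Prop :=
  ∀ {x y : E} (f : x ⟶ y) {ψ : P.obj x ⟶ P.obj y} (β : P.map f ⟶ ψ),
    ∃! _l : OpLift2 P f β, True

lemma whiskerLeft_heq_of_eq_eqToHom {a b c : B} {r : a ⟶ b} {h : a = b} (hr : r = eqToHom h)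
    {p q : b ⟶ c} (η : p ⟶ q) : HEq (r ◁ η) η := by
  subst hr h
  simp [Bicategory.id_whiskerLeft, Bicategory.Strict.leftUnitor_eqToIso]

lemma whiskerRight_heq_of_eq_eqToHom {a b c : B} {p q : a ⟶ b} (η : p ⟶ q) {r : b ⟶ c}
    {h : b = c} (hr : r = eqToHom h) : HEq (η ▷ r) η := by
  subst hr h
  simp [Bicategory.whiskerRight_id, Bicategory.Strict.rightUnitor_eqToIso]

namespace TwoFunctor

variable (P : TwoFunctor E B)

omit [Bicategory.Strict B] in
lemma map₂_eqToHom {x y : E} {f g : x ⟶ y} (h : f = g) :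
    P.map₂ (eqToHom h) = eqToHom (congrArg P.map h) := by
  subst h
  exact P.map₂_id f

lemma map₂_whiskerRight_heq {x y z : E} {f f' : x ⟶ y} (θ : f ⟶ f') {u : y ⟶ z}
    {h : P.obj y = P.obj z} (hu : P.map u = eqToHom h) :
    HEq (P.map₂ (θ ▷ u)) (P.map₂ θ) := by
  rw [P.map₂_whiskerRight]
  exact (eqToHom_comp_heq _ _).trans ((comp_eqToHom_heq _ _).trans
    (whiskerRight_heq_of_eq_eqToHom _ hu))

lemma map₂_whiskerLeft_heq {x y z : E} {v : x ⟶ y} {h : P.obj x = P.obj y}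
    (hv : P.map v = eqToHom h) {g g' : y ⟶ z} (θ : g ⟶ g') :
    HEq (P.map₂ (v ◁ θ)) (P.map₂ θ) := by
  rw [P.map₂_whiskerLeft]
  exact (eqToHom_comp_heq _ _).trans ((comp_eqToHom_heq _ _).trans
    (whiskerLeft_heq_of_eq_eqToHom hv _))

end TwoFunctor

lemma OpLift2.map₂_cell_heq {P : TwoFunctor E B} {x y : E} {f : x ⟶ y}
    {ψ : P.obj x ⟶ P.obj y} {β : P.map f ⟶ ψ} (l : OpLift2 P f β) :
    HEq (P.map₂ l.cell) β := by
  rw [l.cell_over]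
  exact comp_eqToHom_heq _ _

lemma IsLocallyDiscreteOpfibration.target_eq {P : TwoFunctor E B}
    (hloc : IsLocallyDiscreteOpfibration P) {x y : E} {f g g' : x ⟶ y} (θ : f ⟶ g)
    (θ' : f ⟶ g') (h : P.map g = P.map g') (hθ : HEq (P.map₂ θ) (P.map₂ θ')) : g = g' := by
  have hθ' : P.map₂ θ = P.map₂ θ' ≫ eqToHom h.symm :=
    eq_of_heq (hθ.trans (comp_eqToHom_heq _ _).symm)
  obtain ⟨l, -, huniq⟩ := hloc f (P.map₂ θ')
  have hl : (⟨g, θ, h, hθ'⟩ : OpLift2 P f (P.map₂ θ')) = ⟨g', θ', rfl, by simp⟩ :=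
    (huniq _ trivial).trans (huniq _ trivial).symm
  exact congrArg OpLift2.g hl

lemma IsCartesian1.hom_ext {P : TwoFunctor E B} {a x : E} {φ : a ⟶ x}
    (hφ : IsCartesian1 P φ) {c : E} {w w' : c ⟶ a} (hmap : P.map w = P.map w')
    (hcomp : w ≫ φ = w' ≫ φ) : w = w' := by
  obtain ⟨v, -, hv⟩ := hφ (w' ≫ φ) (P.map w') (P.map_comp w' φ)
  exact (hv w ⟨hmap, hcomp⟩).trans (hv w' ⟨rfl, rfl⟩).symm

/-- let `P` be a split discrete 2-fibration with splitting `C`.  For a 2-cell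
`α : f ⟹ g` between `f, g : b ⟶ c`, the assignment sending an object `X` of the fiber over
`c` to the unique vertical morphism `α*_X : f*X ⟶ g*X` with
`α*_X ≫ φ(g,X) = α_!(φ(f,X))` is natural: for every vertical `u : X ⟶ Y` in the fiber it
satisfies `α*_X ≫ g*(u) = f*(u) ≫ α*_Y`, where `f*(u)`, `g*(u)` are the transition morphisms
determined by the cartesian lifts. -/
theorem transition_two_cell_natural (P : TwoFunctor E B) (C : Cleavage P)
    (hloc : IsLocallyDiscreteOpfibration P)
    {b c : B} {f g : b ⟶ c} (α : f ⟶ g)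
    {X Y : E} (hX : P.obj X = c) (hY : P.obj Y = c)
    (u : X ⟶ Y) (hu : P.map u = eqToHom (hX.trans hY.symm))
    -- the targets `α_!(φ(f,X))` and `α_!(φ(f,Y))` of the unique opcartesian 2-cell lifts of
    -- `α` with sources the chosen cartesian lifts `φ(f,X)` and `φ(f,Y)`
    (lX : OpLift2 P (C.pullHom (f ≫ eqToHom hX.symm))
      (eqToHom (C.pullHom_over (f ≫ eqToHom hX.symm)) ≫
        (eqToHom (C.pullOb_over (f ≫ eqToHom hX.symm)) ◁ (α ▷ eqToHom hX.symm))))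
    (lY : OpLift2 P (C.pullHom (f ≫ eqToHom hY.symm))
      (eqToHom (C.pullHom_over (f ≫ eqToHom hY.symm)) ≫
        (eqToHom (C.pullOb_over (f ≫ eqToHom hY.symm)) ◁ (α ▷ eqToHom hY.symm))))
    -- the components `α*_X` and `α*_Y`: vertical morphisms factoring the above lifts
    -- through the chosen cartesian lifts `φ(g,X)`, `φ(g,Y)`
    (aX : C.pullOb (f ≫ eqToHom hX.symm) ⟶ C.pullOb (g ≫ eqToHom hX.symm))
    (haX : P.map aX =
      eqToHom ((C.pullOb_over (f ≫ eqToHom hX.symm)).trans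
        (C.pullOb_over (g ≫ eqToHom hX.symm)).symm))
    (haX2 : aX ≫ C.pullHom (g ≫ eqToHom hX.symm) = lX.g)
    (aY : C.pullOb (f ≫ eqToHom hY.symm) ⟶ C.pullOb (g ≫ eqToHom hY.symm))
    (haY : P.map aY =
      eqToHom ((C.pullOb_over (f ≫ eqToHom hY.symm)).trans
        (C.pullOb_over (g ≫ eqToHom hY.symm)).symm))
    (haY2 : aY ≫ C.pullHom (g ≫ eqToHom hY.symm) = lY.g)
    -- the transition morphisms `f*(u)` and `g*(u)`
    (fu : C.pullOb (f ≫ eqToHom hX.symm) ⟶ C.pullOb (f ≫ eqToHom hY.symm))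
    (hfu : P.map fu =
      eqToHom ((C.pullOb_over (f ≫ eqToHom hX.symm)).trans
        (C.pullOb_over (f ≫ eqToHom hY.symm)).symm))
    (hfu2 : fu ≫ C.pullHom (f ≫ eqToHom hY.symm) = C.pullHom (f ≫ eqToHom hX.symm) ≫ u)
    (gu : C.pullOb (g ≫ eqToHom hX.symm) ⟶ C.pullOb (g ≫ eqToHom hY.symm))
    (hgu : P.map gu =
      eqToHom ((C.pullOb_over (g ≫ eqToHom hX.symm)).trans
        (C.pullOb_over (g ≫ eqToHom hY.symm)).symm))
    (hgu2 : gu ≫ C.pullHom (g ≫ eqToHom hY.symm) = C.pullHom (g ≫ eqToHom hX.symm) ≫ u) :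
    aX ≫ gu = fu ≫ aY := by
  have hbase : ∀ {Z : E} (hZ : P.obj Z = c),
      HEq (eqToHom (C.pullHom_over (f ≫ eqToHom hZ.symm)) ≫
        (eqToHom (C.pullOb_over (f ≫ eqToHom hZ.symm)) ◁ (α ▷ eqToHom hZ.symm))) α :=
    fun _ => (eqToHom_comp_heq _ _).trans ((whiskerLeft_heq_of_eq_eqToHom rfl _).trans
      (whiskerRight_heq_of_eq_eqToHom _ rfl))
  -- `α_!(φ(f,X)) ≫ u` and `f*(u) ≫ α_!(φ(f,Y))` are both targets of lifts of `α`
  -- with source `φ(f,X) ≫ u = f*(u) ≫ φ(f,Y)`.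
  have hlift : lX.g ≫ u = fu ≫ lY.g := by
    refine hloc.target_eq (lX.cell ▷ u) (eqToHom hfu2.symm ≫ fu ◁ lY.cell) ?_ ?_
    · simp [P.map_comp, lX.g_over, lY.g_over, hu, hfu]
    · rw [P.map₂_comp, P.map₂_eqToHom]
      exact (P.map₂_whiskerRight_heq _ hu).trans <| lX.map₂_cell_heq.trans <|
        (hbase hX).trans <| (hbase hY).symm.trans <| lY.map₂_cell_heq.symm.trans <|
        (P.map₂_whiskerLeft_heq hfu _).symm.trans (eqToHom_comp_heq _ _).symm
  refine (C.cartesian _).hom_ext ?_ ?_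
  · simp [P.map_comp, haX, hgu, hfu, haY]
  · rw [Category.assoc, hgu2, ← Category.assoc, haX2, Category.assoc, haY2, hlift]

end Paper
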